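/- Let Ω ⊂ ℝⁿ be a domain, s ∈ (0,1], p ∈ (n/s,∞), and suppose there exist δ > 0 and C > 0 such that for all u ∈ Ṁ^{s,p}_ball(Ω) and almost all x, y ∈ Ω with |x−y| ≤ δ one has |u(x)−u(y)| ≤ C|x−y|^{s−n/p}·‖u‖_{Ṁ^{s,p}_ball(Ω)}. Then Ω is regular: there exist θ, c > 0 such that |B(x,ρ) ∩ Ω| ≥ c·ρⁿ for all x ∈ closure(Ω) and ρ ∈ (0,θ). (Proof: test with u(z) = ρ^{-1}·dist(z, ℝⁿ \ B(x₀,ρ)), which has Hajłasz gradient comparable to ρ^{−s}·χ_{Ω ∩ B(x₀,ρ)}.) -/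

import Mathlib

open MeasureTheory Metric Set ENNReal

/-- `g ∈ D^s_ball(u)` on `Ω`. -/
def MemDBall {n : ℕ} (Ω : Set (EuclideanSpace ℝ (Fin n))) (s : ℝ)
    (u g : EuclideanSpace ℝ (Fin n) → ℝ) : Prop :=
  (∀ x, 0 ≤ g x) ∧ Measurable g ∧
  ∃ E : Set (EuclideanSpace ℝ (Fin n)), volume E = 0 ∧
    ∀ x ∈ Ω \ E, ∀ y ∈ Ω \ E,
      ENNReal.ofReal (2 * dist x y) < EMetric.infEdist x Ωᶜ →
      |u x - u y| ≤ dist x y ^ s * (g x + g y)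

/-- `‖u‖_{Ṁ^{s,p}_ball(Ω)}` valued in `ℝ≥0∞`. -/
noncomputable def hajlaszBallNorm {n : ℕ} (Ω : Set (EuclideanSpace ℝ (Fin n)))
    (s p : ℝ) (u : EuclideanSpace ℝ (Fin n) → ℝ) : ℝ≥0∞ :=
  sInf {t : ℝ≥0∞ | ∃ g, MemDBall Ω s u g ∧
    t = eLpNorm g (ENNReal.ofReal p) (volume.restrict Ω)}


section AuxiliaryLemmas

variable {n : ℕ}


lemma exists_dist_eq' (hn : 1 ≤ n) (x₀ : EuclideanSpace ℝ (Fin n)) {ρ : ℝ} (hρ : 0 ≤ ρ) :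
    ∃ w : EuclideanSpace ℝ (Fin n), dist w x₀ = ρ := by
  refine ⟨x₀ + ρ • EuclideanSpace.single (⟨0, hn⟩ : Fin n) (1 : ℝ), ?_⟩
  rw [dist_eq_norm]
  simp [norm_smul, abs_of_nonneg hρ, EuclideanSpace.norm_single]

lemma compl_ball_nonempty (hn : 1 ≤ n) (x₀ : EuclideanSpace ℝ (Fin n)) {ρ : ℝ} (hρ : 0 ≤ ρ) :
    ((ball x₀ ρ)ᶜ).Nonempty := by
  obtain ⟨w, hw⟩ := exists_dist_eq' hn x₀ hρ
  exact ⟨w, by simp [mem_ball, hw]⟩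

lemma le_infDist_compl_ball (hn : 1 ≤ n) {x₀ y : EuclideanSpace ℝ (Fin n)} {ρ : ℝ}
    (hρ : 0 < ρ) : ρ - dist y x₀ ≤ infDist y (ball x₀ ρ)ᶜ := by
  by_contra h
  push_neg at h
  obtain ⟨w, hw, hwd⟩ := (infDist_lt_iff (compl_ball_nonempty hn x₀ hρ.le)).mp h
  rw [mem_compl_iff, mem_ball, not_lt] at hw
  have := dist_triangle w y x₀
  rw [dist_comm w y] at this
  linarith

lemma infDist_compl_ball_le' (hn : 1 ≤ n) {x₀ y : EuclideanSpace ℝ (Fin n)} {ρ : ℝ}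
    (hρ : 0 < ρ) (hy : dist y x₀ ≤ ρ) : infDist y (ball x₀ ρ)ᶜ ≤ ρ - dist y x₀ := by
  set d := dist y x₀ with hd
  rcases eq_or_lt_of_le (dist_nonneg : (0:ℝ) ≤ d) with h0 | h0
  · -- y = x₀
    have hyx : y = x₀ := by rwa [eq_comm, dist_eq_zero] at h0
    obtain ⟨w, hw⟩ := exists_dist_eq' hn x₀ hρ.le
    have hwmem : w ∈ (ball x₀ ρ)ᶜ := by simp [mem_ball, hw]
    calc infDist y (ball x₀ ρ)ᶜ ≤ dist y w := infDist_le_dist_of_mem hwmem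
      _ = ρ := by rw [hyx, dist_comm, hw]
      _ = ρ - d := by rw [hd, ← h0]; ring
  · set w : EuclideanSpace ℝ (Fin n) := x₀ + (ρ / d) • (y - x₀) with hwdef
    have hyx0 : ‖y - x₀‖ = d := by rw [hd, dist_eq_norm]
    have hwx₀ : dist w x₀ = ρ := by
      rw [hwdef, dist_eq_norm, add_sub_cancel_left, norm_smul, hyx0,
        Real.norm_eq_abs, abs_of_pos (div_pos hρ h0), div_mul_cancel₀ _ h0.ne']
    have hwmem : w ∈ (ball x₀ ρ)ᶜ := by simp [mem_ball, hwx₀]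
    have hyw : dist y w = ρ - d := by
      have : y - w = (1 - ρ / d) • (y - x₀) := by
        rw [hwdef]; module
      rw [dist_eq_norm, this, norm_smul, hyx0, Real.norm_eq_abs,
        abs_of_nonpos (by rw [sub_nonpos]; exact (le_div_iff₀ h0).mpr (by linarith)),
        neg_sub]
      field_simp
      rw [mul_sub, mul_one, mul_div_assoc', mul_div_cancel_left₀ ρ (h0.ne' : d ≠ 0)]
    calc infDist y (ball x₀ ρ)ᶜ ≤ dist y w := infDist_le_dist_of_mem hwmem
      _ = ρ - d := hyw

lemma infDist_compl_ball_le_radius (hn : 1 ≤ n) {x₀ : EuclideanSpace ℝ (Fin n)}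
    (y : EuclideanSpace ℝ (Fin n)) {ρ : ℝ} (hρ : 0 < ρ) :
    infDist y (ball x₀ ρ)ᶜ ≤ ρ := by
  by_cases hy : y ∈ ball x₀ ρ
  · have := infDist_compl_ball_le' hn hρ (mem_ball.mp hy).le
    have : (0:ℝ) ≤ dist y x₀ := dist_nonneg
    linarith [infDist_compl_ball_le' hn hρ (le_of_lt (mem_ball.mp ‹y ∈ ball x₀ ρ›))]
  · rw [infDist_zero_of_mem (mem_compl hy)]; exact hρ.le

lemma hajlasz_key (hn : 1 ≤ n) {x₀ : EuclideanSpace ℝ (Fin n)}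
    (z w : EuclideanSpace ℝ (Fin n)) {ρ s : ℝ}
    (hρ : 0 < ρ) (hs : 0 < s) (hs1 : s ≤ 1) :
    |ρ⁻¹ * infDist z (ball x₀ ρ)ᶜ - ρ⁻¹ * infDist w (ball x₀ ρ)ᶜ| ≤
      dist z w ^ s * ρ ^ (-s) := by
  set B := ball x₀ ρ with hB
  set d := dist z w with hd
  have hd0 : 0 ≤ d := dist_nonneg
  have hu1 : ∀ a, ρ⁻¹ * infDist a Bᶜ ≤ 1 := fun a => by
    rw [← inv_mul_cancel₀ hρ.ne']
    exact mul_le_mul_of_nonneg_left (infDist_compl_ball_le_radius hn a hρ)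
      (inv_nonneg.mpr hρ.le)
  have hu0 : ∀ a, 0 ≤ ρ⁻¹ * infDist a Bᶜ := fun a =>
    mul_nonneg (inv_nonneg.mpr hρ.le) infDist_nonneg
  have hlip : |ρ⁻¹ * infDist z Bᶜ - ρ⁻¹ * infDist w Bᶜ| ≤ ρ⁻¹ * d := by
    rw [← mul_sub, abs_mul, abs_of_nonneg (inv_nonneg.mpr hρ.le)]
    refine mul_le_mul_of_nonneg_left ?_ (inv_nonneg.mpr hρ.le)
    rw [abs_sub_le_iff]
    have h1 := infDist_le_infDist_add_dist (x := z) (y := w) (s := Bᶜ)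
    have h2 := infDist_le_infDist_add_dist (x := w) (y := z) (s := Bᶜ)
    rw [dist_comm w z] at h2
    constructor <;> linarith
  have hrw : d ^ s * ρ ^ (-s) = (d / ρ) ^ s := by
    rw [Real.div_rpow hd0 hρ.le, Real.rpow_neg hρ.le, div_eq_mul_inv]
  rcases eq_or_lt_of_le hd0 with h0 | h0
  · have hzw : z = w := by rw [← dist_eq_zero, ← hd, ← h0]
    rw [hzw, sub_self, abs_zero]
    positivity
  rw [hrw]
  rcases le_total d ρ with hdρ | hdρ
  · calc |ρ⁻¹ * infDist z Bᶜ - ρ⁻¹ * infDist w Bᶜ| ≤ ρ⁻¹ * d := hlip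
      _ = (d / ρ) ^ (1:ℝ) := by rw [Real.rpow_one]; ring
      _ ≤ (d / ρ) ^ s := Real.rpow_le_rpow_of_exponent_ge (div_pos h0 hρ)
            ((div_le_one hρ).mpr hdρ) hs1
  · have h1 : |ρ⁻¹ * infDist z Bᶜ - ρ⁻¹ * infDist w Bᶜ| ≤ 1 := by
      rw [abs_sub_le_iff]
      constructor <;> linarith [hu0 z, hu0 w, hu1 z, hu1 w]
    calc |ρ⁻¹ * infDist z Bᶜ - ρ⁻¹ * infDist w Bᶜ| ≤ 1 := h1
      _ ≤ (d / ρ) ^ s := Real.one_le_rpow ((one_le_div hρ).mpr hdρ) hs.le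

lemma open_diff_null_nonempty {U E : Set (EuclideanSpace ℝ (Fin n))}
    (hU : IsOpen U) (hne : U.Nonempty) (hE : volume E = 0) : (U \ E).Nonempty := by
  by_contra h
  rw [not_nonempty_iff_eq_empty, diff_eq_empty] at h
  exact absurd (le_antisymm (le_trans (measure_mono h) hE.le) zero_le)
    (hU.measure_pos volume hne).ne'

lemma final_algebra {C ρ V p s nn : ℝ} (hC : 0 < C) (hρ : 0 < ρ) (hV : 0 ≤ V)
    (hp : 0 < p) (hs : 0 < s) (he : 0 < s - nn / p)
    (h : 1 / 4 ≤ C * (2 * ρ) ^ (s - nn / p) * (ρ ^ (-s) * V ^ (1 / p))) :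
    ((4 * (C * 2 ^ (s - nn / p))) ^ p)⁻¹ * ρ ^ nn ≤ V := by
  set e := s - nn / p with hedef
  set K := C * 2 ^ e with hKdef
  have hK : 0 < K := mul_pos hC (Real.rpow_pos_of_pos two_pos e)
  set a := ρ ^ (nn / p) with hadef
  have ha : 0 < a := Real.rpow_pos_of_pos hρ _
  have h1 : (2 * ρ) ^ e = 2 ^ e * ρ ^ e := Real.mul_rpow (by norm_num) hρ.le
  have h2 : ρ ^ e * ρ ^ (-s) = a⁻¹ := by
    rw [← Real.rpow_add hρ, ← Real.rpow_neg hρ.le]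
    congr 1
    rw [hedef]; ring
  have h3 : 1 / 4 ≤ K * (a⁻¹ * V ^ (1 / p)) := by
    calc (1:ℝ)/4 ≤ C * (2 * ρ) ^ e * (ρ ^ (-s) * V ^ (1/p)) := h
      _ = K * (a⁻¹ * V ^ (1/p)) := by rw [h1, ← h2, hKdef]; ring
  have h4 : a / (4 * K) ≤ V ^ (1 / p) := by
    rw [div_le_iff₀ (by positivity)]
    have := mul_le_mul_of_nonneg_left h3 ha.le
    calc a = a * (1/4) * 4 := by ring
      _ ≤ a * (K * (a⁻¹ * V ^ (1/p))) * 4 := by nlinarith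
      _ = V ^ (1/p) * (4 * K) := by field_simp
  have h5 : (a / (4 * K)) ^ p ≤ (V ^ (1 / p)) ^ p :=
    Real.rpow_le_rpow (by positivity) h4 hp.le
  have h6 : (V ^ (1 / p)) ^ p = V := by
    rw [← Real.rpow_mul hV, one_div_mul_cancel hp.ne', Real.rpow_one]
  have h7 : (a / (4 * K)) ^ p = ((4 * K) ^ p)⁻¹ * ρ ^ nn := by
    rw [Real.div_rpow ha.le (by positivity), hadef, ← Real.rpow_mul hρ.le,
      div_mul_cancel₀ _ hp.ne']
    ring
  rw [← h6, ← h7]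
  exact h5

end AuxiliaryLemmas

/-- If a domain `Ω` supports the Morrey-type imbedding
`|u(x)−u(y)| ≤ C|x−y|^{s−n/p}‖u‖_{Ṁ^{s,p}_ball(Ω)}` for a.e. `x, y ∈ Ω` with
`|x−y| ≤ δ`, then `Ω` is regular: `|B(x,ρ) ∩ Ω| ≥ c ρⁿ` for all `x ∈ closure Ω`
and small `ρ`. -/
theorem imbedding_implies_regular {n : ℕ} (hn : 1 ≤ n)
    (Ω : Set (EuclideanSpace ℝ (Fin n))) (hΩopen : IsOpen Ω) (hΩconn : IsConnected Ω)
    (s p : ℝ) (hs : 0 < s) (hs1 : s ≤ 1) (hp : (n : ℝ) / s < p)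
    (δ C : ℝ) (hδ : 0 < δ) (hC : 0 < C)
    (himb : ∀ u : EuclideanSpace ℝ (Fin n) → ℝ,
      (∃ g, MemDBall Ω s u g ∧ eLpNorm g (ENNReal.ofReal p) (volume.restrict Ω) ≠ ⊤) →
      ∃ E : Set (EuclideanSpace ℝ (Fin n)), volume E = 0 ∧
        ∀ x ∈ Ω \ E, ∀ y ∈ Ω \ E, dist x y ≤ δ →
          |u x - u y| ≤ C * dist x y ^ (s - n / p) * (hajlaszBallNorm Ω s p u).toReal) :
    ∃ θ > (0 : ℝ), ∃ c > (0 : ℝ), ∀ x ∈ closure Ω, ∀ ρ : ℝ, 0 < ρ → ρ < θ →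
      c * ρ ^ (n : ℝ) ≤ (volume (ball x ρ ∩ Ω)).toReal := by
  -- basic positivity facts
  have hnR : (0 : ℝ) < n := by exact_mod_cast Nat.lt_of_lt_of_le Nat.zero_lt_one hn
  have hp0 : 0 < p := lt_trans (div_pos hnR hs) hp
  have he : 0 < s - (n : ℝ) / p := by
    rw [sub_pos, div_lt_iff₀ hp0]
    rw [div_lt_iff₀ hs] at hp
    linarith [mul_comm p s]
  -- two points of Ω at definite distance
  obtain ⟨a, haΩ⟩ := hΩconn.nonempty
  obtain ⟨r, hr0, hball⟩ := Metric.isOpen_iff.mp hΩopen a haΩ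
  obtain ⟨b, hb⟩ := exists_dist_eq' hn a (le_of_lt (by linarith : (0:ℝ) < r/2))
  have hbΩ : b ∈ Ω := hball (by rw [mem_ball, hb]; linarith)
  -- choose θ and c
  refine ⟨min (δ/2) (r/8), lt_min (by linarith) (by linarith), 
    ((4 * (C * 2 ^ (s - (n:ℝ) / p))) ^ p)⁻¹, by positivity, ?_⟩
  intro x₀ hx₀ ρ hρ0 hρθ
  have hρδ : ρ < δ / 2 := lt_of_lt_of_le hρθ (min_le_left _ _)
  have hρr : ρ < r / 8 := lt_of_lt_of_le hρθ (min_le_right _ _)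
  set B := ball x₀ ρ with hBdef
  set u : EuclideanSpace ℝ (Fin n) → ℝ := fun z => ρ⁻¹ * infDist z Bᶜ with hudef
  set g : EuclideanSpace ℝ (Fin n) → ℝ := B.indicator (fun _ => ρ ^ (-s)) with hgdef
  have hρs : (0:ℝ) < ρ ^ (-s) := Real.rpow_pos_of_pos hρ0 _
  -- g is a Hajłasz gradient of u
  have hg0 : ∀ x, 0 ≤ g x := fun x => indicator_nonneg (fun _ _ => hρs.le) x
  have hgkey : ∀ z w : EuclideanSpace ℝ (Fin n),
      |u z - u w| ≤ dist z w ^ s * (g z + g w) := by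
    intro z w
    by_cases hz : z ∈ B
    · calc |u z - u w| ≤ dist z w ^ s * ρ ^ (-s) := hajlasz_key hn z w hρ0 hs hs1
        _ ≤ dist z w ^ s * (g z + g w) := by
            refine mul_le_mul_of_nonneg_left ?_ (Real.rpow_nonneg dist_nonneg _)
            rw [hgdef, indicator_of_mem hz]
            linarith [hg0 w]
    by_cases hw : w ∈ B
    · rw [abs_sub_comm, dist_comm]
      calc |u w - u z| ≤ dist w z ^ s * ρ ^ (-s) := hajlasz_key hn w z hρ0 hs hs1
        _ ≤ dist w z ^ s * (g z + g w) := by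
            refine mul_le_mul_of_nonneg_left ?_ (Real.rpow_nonneg dist_nonneg _)
            rw [hgdef, indicator_of_mem hw]
            linarith [hg0 z]
    · have h1 : u z = 0 := by rw [hudef]; simp [infDist_zero_of_mem (mem_compl hz)]
      have h2 : u w = 0 := by rw [hudef]; simp [infDist_zero_of_mem (mem_compl hw)]
      rw [h1, h2, sub_zero, abs_zero]
      exact mul_nonneg (Real.rpow_nonneg dist_nonneg _) (by linarith [hg0 z, hg0 w])
  have hmem : MemDBall Ω s u g :=
    ⟨hg0, Measurable.indicator measurable_const measurableSet_ball,
      ∅, measure_empty, fun z hz w hw _ => hgkey z w⟩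
  -- the Lp norm of g
  have hVfin : volume (B ∩ Ω) ≠ ⊤ :=
    (lt_of_le_of_lt (measure_mono inter_subset_left) measure_ball_lt_top).ne
  set V : ℝ := (volume (B ∩ Ω)).toReal with hVdef
  have hnorm : eLpNorm g (ENNReal.ofReal p) (volume.restrict Ω) =
      ↑‖(ρ ^ (-s) : ℝ)‖₊ * (volume (B ∩ Ω)) ^ (1 / p) := by
    rw [hgdef, eLpNorm_indicator_const measurableSet_ball
      (by simpa using (ENNReal.ofReal_pos.mpr hp0).ne') ENNReal.ofReal_ne_top,
      ENNReal.toReal_ofReal hp0.le, Measure.restrict_apply measurableSet_ball, enorm_eq_nnnorm]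
  have hfin : eLpNorm g (ENNReal.ofReal p) (volume.restrict Ω) ≠ ⊤ := by
    rw [hnorm]
    exact ENNReal.mul_ne_top ENNReal.coe_ne_top
      (ENNReal.rpow_ne_top_of_nonneg (by positivity) hVfin)
  have hnormtoReal : (eLpNorm g (ENNReal.ofReal p) (volume.restrict Ω)).toReal =
      ρ ^ (-s) * V ^ (1 / p) := by
    rw [hnorm, ENNReal.toReal_mul, ENNReal.toReal_rpow, ENNReal.coe_toReal,
      coe_nnnorm, Real.norm_eq_abs, abs_of_nonneg hρs.le]
  -- bound on the Hajłasz norm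
  have hNle : (hajlaszBallNorm Ω s p u).toReal ≤ ρ ^ (-s) * V ^ (1 / p) := by
    rw [← hnormtoReal]
    exact ENNReal.toReal_mono hfin (sInf_le ⟨g, hmem, rfl⟩)
  -- apply the imbedding hypothesis
  obtain ⟨Ee, hEe0, hEimb⟩ := himb u ⟨g, hmem, hfin⟩
  -- a point of Ω close to x₀
  obtain ⟨x', hx'Ω, hx'd⟩ := Metric.mem_closure_iff.mp hx₀ (ρ/2) (by linarith)
  -- a point of Ω far from x₀
  have hzfar : ∃ z ∈ Ω, ρ ≤ dist z x₀ := by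
    by_contra h
    push_neg at h
    have h1 := h a haΩ
    have h2 := h b hbΩ
    have h3 := dist_triangle b x₀ a
    rw [dist_comm x₀ a] at h3
    linarith
  obtain ⟨z, hzΩ, hzd⟩ := hzfar
  -- intermediate point at distance 7ρ/8
  have hy₀ : ∃ y₀ ∈ Ω, dist y₀ x₀ = 7 * ρ / 8 := by
    have hiv := hΩconn.isPreconnected.intermediate_value hx'Ω hzΩ
      (Continuous.continuousOn (continuous_id.dist continuous_const) :
        ContinuousOn (fun w => dist w x₀) Ω)
    have hmem78 : (7 * ρ / 8 : ℝ) ∈ Icc (dist x' x₀) (dist z x₀) := by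
      constructor
      · rw [dist_comm] at hx'd; linarith
      · linarith
    obtain ⟨y₀, hy₀Ω, hy₀d⟩ := hiv hmem78
    exact ⟨y₀, hy₀Ω, hy₀d⟩
  obtain ⟨y₀, hy₀Ω, hy₀d⟩ := hy₀
  -- pick x, y avoiding the null set
  obtain ⟨x, ⟨hxΩ, hxB⟩, hxE⟩ := open_diff_null_nonempty
    (hΩopen.inter isOpen_ball) ⟨x', hx'Ω, by rwa [mem_ball, dist_comm]⟩ hEe0
    (U := Ω ∩ ball x₀ (ρ/2))
  obtain ⟨y, ⟨hyΩ, hyB⟩, hyE⟩ := open_diff_null_nonempty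
    (hΩopen.inter isOpen_ball) ⟨y₀, hy₀Ω, mem_ball_self (by linarith)⟩ hEe0
    (U := Ω ∩ ball y₀ (ρ/16))
  rw [mem_ball] at hxB hyB
  -- distance bounds
  have hdist1 : dist y x₀ ≥ 13 * ρ / 16 := by
    have := dist_triangle y₀ y x₀
    rw [dist_comm y₀ y] at this
    linarith
  have hdxy : dist x y ≤ 23 * ρ / 16 := by
    have h1 := dist_triangle x x₀ y
    have h2 := dist_triangle x₀ y₀ y
    rw [dist_comm x₀ y₀] at h2
    rw [dist_comm y₀ y] at h2
    linarith
  have hdδ : dist x y ≤ δ := by linarith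
  -- value bounds
  have hux : 1 / 2 ≤ u x := by
    have h1 := le_infDist_compl_ball hn (x₀ := x₀) (y := x) hρ0
    have : ρ / 2 ≤ infDist x Bᶜ := by linarith
    calc (1:ℝ)/2 = ρ⁻¹ * (ρ/2) := by field_simp
      _ ≤ ρ⁻¹ * infDist x Bᶜ := by
          exact mul_le_mul_of_nonneg_left this (inv_nonneg.mpr hρ0.le)
  have huy : u y ≤ 1 / 4 := by
    have hid : infDist y Bᶜ ≤ 3 * ρ / 16 := by
      by_cases hyB' : y ∈ B
      · have := infDist_compl_ball_le' hn hρ0 (le_of_lt (mem_ball.mp hyB'))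
        linarith
      · rw [infDist_zero_of_mem (mem_compl hyB')]; linarith
    calc u y = ρ⁻¹ * infDist y Bᶜ := rfl
      _ ≤ ρ⁻¹ * (3 * ρ / 16) :=
          mul_le_mul_of_nonneg_left hid (inv_nonneg.mpr hρ0.le)
      _ = 3 / 16 := by field_simp
      _ ≤ 1/4 := by norm_num
  -- apply imbedding inequality
  have hmain := hEimb x ⟨hxΩ, hxE⟩ y ⟨hyΩ, hyE⟩ hdδ
  have hquarter : 1 / 4 ≤
      C * (2 * ρ) ^ (s - (n:ℝ)/p) * (ρ ^ (-s) * V ^ (1/p)) := by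
    have hlhs : 1 / 4 ≤ |u x - u y| := by
      rw [abs_of_nonneg (by linarith : (0:ℝ) ≤ u x - u y)]
      linarith
    have hrhs : C * dist x y ^ (s - (n:ℝ)/p) * (hajlaszBallNorm Ω s p u).toReal ≤
        C * (2 * ρ) ^ (s - (n:ℝ)/p) * (ρ ^ (-s) * V ^ (1/p)) := by
      have hde : dist x y ^ (s - (n:ℝ)/p) ≤ (2 * ρ) ^ (s - (n:ℝ)/p) :=
        Real.rpow_le_rpow dist_nonneg (by linarith) he.le
      exact mul_le_mul (mul_le_mul_of_nonneg_left hde hC.le) hNle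
        ENNReal.toReal_nonneg (by positivity)
    exact le_trans (le_trans hlhs hmain) hrhs
  have := final_algebra hC hρ0 ENNReal.toReal_nonneg hp0 hs he hquarter
  exact this
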